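/- Let c be a critical cell of UD^nΓ. Then every vertex of c is blocked in c, and every edge e ∈ c either is a deleted edge, or lies in T, in which case τ(e) is an essential vertex and there is a vertex v ∈ c adjacent to τ(e) in T with τ(e) < v < ι(e) in the vertex order. -/

import Mathlib

open SimpleGraph

attribute [local instance] Classical.propDecidable

namespace GraphBraid

/-- The degree of a vertex, defined via `Set.ncard` to avoid decidability assumptions. -/
noncomputable def ncdeg {V : Type} (H : SimpleGraph V) (v : V) : ℕ := (H.neighborSet v).ncard

/-- The basic setup: a finite connected simple graph `G` with a spanning tree `T`,
a root `root` of degree one in `T`, and a labelling of the edges of `T` incident to each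
vertex `u` by the numbers `0, …, d_T(u) - 1`, where the edge towards the root receives the
label `0` (and the unique edge at the root receives the label `1`). -/
structure Setup (V : Type) [Fintype V] [DecidableEq V] where
  G : SimpleGraph V
  G_conn : G.Connected
  T : SimpleGraph V
  T_le : T ≤ G
  T_tree : T.IsTree
  root : V
  root_deg : ncdeg T root = 1
  label : V → V → ℕ
  label_bij : ∀ u : V, u ≠ root → Set.BijOn (label u) (T.neighborSet u) (Set.Iio (ncdeg T u))
  label_zero : ∀ u : V, u ≠ root → ∀ w : V, T.Adj u w →
    (label u w = 0 ↔ T.dist root w + 1 = T.dist root u)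
  label_root : ∀ w : V, T.Adj root w → label root w = 1

namespace Setup

variable {V : Type} [Fintype V] [DecidableEq V] (S : Setup V)

/-- The unique geodesic (path) in the tree `T` from `u` to `w`. -/
noncomputable def geod (u w : V) : S.T.Walk u w := (S.T_tree.existsUnique_path u w).choose

/-- `g(u,w)`: the label at `u` of the first edge of the tree geodesic from `u` to `w`,
with `g(u,u) = 0`. -/
noncomputable def gfun (u w : V) : ℕ :=
  if u = w then 0 else S.label u ((S.geod u w).getVert 1)

lemma exists_wedge (u w : V) :
    ∃ x : V, (x ∈ (S.geod S.root u).support ∧ x ∈ (S.geod S.root w).support) ∧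
      ∀ y : V, y ∈ (S.geod S.root u).support → y ∈ (S.geod S.root w).support →
        S.T.dist S.root y ≤ S.T.dist S.root x := by
  classical
  have hne : ((S.geod S.root u).support.toFinset ∩
      (S.geod S.root w).support.toFinset).Nonempty :=
    ⟨S.root, by simp [SimpleGraph.Walk.start_mem_support]⟩
  obtain ⟨x, hx, hmax⟩ := Finset.exists_max_image _ (fun y => S.T.dist S.root y) hne
  simp only [Finset.mem_inter, List.mem_toFinset] at hx hmax
  exact ⟨x, ⟨hx.1, hx.2⟩, fun y h1 h2 => hmax y ⟨h1, h2⟩⟩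

/-- `u ∧ w`: the vertex farthest from the root lying on both tree geodesics from the
root to `u` and from the root to `w`. -/
noncomputable def wedge (u w : V) : V := (S.exists_wedge u w).choose

/-- The order on vertices: `u ≤ w` iff `u ∧ w = u`, or `u ∧ w ≠ u` and
`g(u ∧ w, u) < g(u ∧ w, w)`. -/
def vle (u w : V) : Prop :=
  S.wedge u w = u ∨ (S.wedge u w ≠ u ∧ S.gfun (S.wedge u w) u < S.gfun (S.wedge u w) w)

/-- The associated strict order on vertices. -/
def vlt (u w : V) : Prop := S.vle u w ∧ u ≠ w

/-- `ι(e)`: the larger endpoint of the edge `e` in the vertex order. -/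
noncomputable def iota (e : Sym2 V) : V :=
  if S.vle (Quot.out e).1 (Quot.out e).2 then (Quot.out e).2 else (Quot.out e).1

/-- `τ(e)`: the smaller endpoint of the edge `e` in the vertex order. -/
noncomputable def tau (e : Sym2 V) : V :=
  if S.vle (Quot.out e).1 (Quot.out e).2 then (Quot.out e).1 else (Quot.out e).2

/-- `e(v)`: the edge of `T` incident to `v` lying on the tree geodesic from `v` to the root. -/
noncomputable def eV (v : V) : Sym2 V := s(v, (S.geod v S.root).getVert 1)

/-- A cell of `UD^n Γ`: an `n`-element set whose elements are vertices (encoded as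
diagonal elements of `Sym2 V`) and closed edges of `G`, no two distinct elements of which
share a vertex. -/
def IsCell (n : ℕ) (c : Finset (Sym2 V)) : Prop :=
  c.card = n ∧ (∀ s ∈ c, s.IsDiag ∨ s ∈ S.G.edgeSet) ∧
    ∀ s ∈ c, ∀ t ∈ c, s ≠ t → ∀ x : V, x ∈ s → x ∉ t

/-- The dimension of a cell: the number of edges it contains. -/
noncomputable def dim (c : Finset (Sym2 V)) : ℕ := (c.filter (fun s => ¬ s.IsDiag)).card

/-- A vertex `v` is blocked in `c` if `v` is the root, or `e(v)` shares a vertex with some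
element of `c` other than `v`. -/
def Blocked (c : Finset (Sym2 V)) (v : V) : Prop :=
  v = S.root ∨ ∃ s ∈ c, s ≠ Sym2.diag v ∧ ∃ x : V, x ∈ S.eV v ∧ x ∈ s

/-- A vertex `v` is unblocked in `c` if it belongs to `c` and is not blocked. -/
def Unblocked (c : Finset (Sym2 V)) (v : V) : Prop := Sym2.diag v ∈ c ∧ ¬ S.Blocked c v

/-- The elementary reduction of `c` from the vertex `v`: replace `v` by the edge `e(v)`. -/
noncomputable def redFrom (c : Finset (Sym2 V)) (v : V) : Finset (Sym2 V) :=
  insert (S.eV v) (c.erase (Sym2.diag v))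

/-- `c'` is the principal elementary reduction of `c`: it is the elementary reduction of `c`
from the smallest unblocked vertex of `c`. -/
def PrincipalRedOf (c c' : Finset (Sym2 V)) : Prop :=
  ∃ v : V, S.Unblocked c v ∧ (∀ u : V, S.Unblocked c u → S.vle v u) ∧ c' = S.redFrom c v

/-- Auxiliary definition of redundancy, by induction on the dimension: a cell of
dimension `i` is redundant iff it has an unblocked vertex and it is not the principal
elementary reduction of a redundant cell of dimension `i - 1`. -/
def RedundantAux (n : ℕ) : ℕ → Finset (Sym2 V) → Prop
  | 0, c => ∃ v, S.Unblocked c v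
  | (i + 1), c => (∃ v, S.Unblocked c v) ∧
      ¬ ∃ c₀, S.IsCell n c₀ ∧ dim c₀ = i ∧ RedundantAux n i c₀ ∧ S.PrincipalRedOf c₀ c

/-- A cell is redundant if the discrete vector field `W` is defined on it. -/
def Redundant (n : ℕ) (c : Finset (Sym2 V)) : Prop := S.RedundantAux n (dim c) c

/-- A cell is collapsible if it lies in the image of `W`. -/
def Collapsible (n : ℕ) (c : Finset (Sym2 V)) : Prop :=
  ∃ c₀, S.IsCell n c₀ ∧ S.Redundant n c₀ ∧ S.PrincipalRedOf c₀ c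

/-- A cell is critical if it is neither redundant nor collapsible. -/
def Critical (n : ℕ) (c : Finset (Sym2 V)) : Prop :=
  ¬ S.Redundant n c ∧ ¬ S.Collapsible n c

/-- An edge `e` of the cell `c` is order-respecting in `c` if `e` lies in `T` and every
vertex `v ∈ c` such that `e(v)` and `e` share the vertex `τ(e)` satisfies `v > ι(e)`. -/
def OrderResp (c : Finset (Sym2 V)) (e : Sym2 V) : Prop :=
  e ∈ c ∧ e ∈ S.T.edgeSet ∧
    ∀ v : V, v ≠ S.root → Sym2.diag v ∈ c → S.tau e ∈ S.eV v → S.vlt (S.iota e) v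

/-- `e` is the minimal order-respecting edge of `c`. -/
def MinOrderResp (c : Finset (Sym2 V)) (e : Sym2 V) : Prop :=
  S.OrderResp c e ∧ ∀ e' : Sym2 V, S.OrderResp c e' → S.vle (S.iota e) (S.iota e')

/-- `c'` is a face of `c` obtained by replacing one edge of `c` by one of its endpoints. -/
def IsFace (c' c : Finset (Sym2 V)) : Prop :=
  ∃ (e : Sym2 V) (x : V), e ∈ c ∧ ¬ e.IsDiag ∧ x ∈ e ∧ c' = insert (Sym2.diag x) (c.erase e)

/-- `Γ` is sufficiently subdivided for `n`: every path between distinct vertices of degree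
`≠ 2` passes through at least `n - 1` edges, and every cycle has length at least `n + 1`. -/
def SuffSubdiv (n : ℕ) : Prop :=
  (∀ u v : V, u ≠ v → ncdeg S.G u ≠ 2 → ncdeg S.G v ≠ 2 →
    ∀ p : S.G.Walk u v, p.IsPath → n - 1 ≤ p.length) ∧
  (∀ v : V, ∀ p : S.G.Walk v v, p.IsCycle → n + 1 ≤ p.length)

section Lemmas

open SimpleGraph Walk

variable {V : Type} [Fintype V] [DecidableEq V] (S : Setup V)

lemma geod_isPath (u w : V) : (S.geod u w).IsPath :=
  (S.T_tree.existsUnique_path u w).choose_spec.1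

lemma geod_unique {u w : V} (p : S.T.Walk u w) (hp : p.IsPath) : p = S.geod u w :=
  (S.T_tree.existsUnique_path u w).choose_spec.2 p hp

lemma T_conn : S.T.Connected := S.T_tree.isConnected

lemma geod_length (u w : V) : (S.geod u w).length = S.T.dist u w := by
  obtain ⟨p, hp, hl⟩ := S.T_conn.exists_path_of_dist u w
  rwa [S.geod_unique p hp] at hl

lemma dist_pos_of_ne {u w : V} (h : u ≠ w) : 0 < S.T.dist u w :=
  S.T_conn.pos_dist_of_ne h

lemma dist_adj {u w : V} (h : S.T.Adj u w) : S.T.dist u w = 1 :=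
  SimpleGraph.dist_eq_one_iff_adj.2 h

lemma geod_split {u w x : V} (hx : x ∈ (S.geod u w).support) :
    S.geod u w = (S.geod u x).append (S.geod x w) := by
  have h1 := (S.geod_isPath u w).takeUntil hx
  have h2 := (S.geod_isPath u w).dropUntil hx
  have h := Walk.take_spec (S.geod u w) hx
  rw [S.geod_unique _ h1, S.geod_unique _ h2] at h
  exact h.symm

lemma dist_split {u w x : V} (hx : x ∈ (S.geod u w).support) :
    S.T.dist u x + S.T.dist x w = S.T.dist u w := by
  have h := congrArg Walk.length (S.geod_split hx)
  rw [Walk.length_append, S.geod_length, S.geod_length, S.geod_length] at h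
  omega

/-- `x` is an ancestor of `y`. -/
def Anc (x y : V) : Prop := x ∈ (S.geod S.root y).support

lemma anc_refl (y : V) : S.Anc y y := Walk.end_mem_support _

lemma anc_root (y : V) : S.Anc S.root y := Walk.start_mem_support _

lemma dist_add_of_anc {x y : V} (h : S.Anc x y) :
    S.T.dist S.root x + S.T.dist x y = S.T.dist S.root y := S.dist_split h

lemma anc_trans {x y z : V} (hxy : S.Anc x y) (hyz : S.Anc y z) : S.Anc x z := by
  unfold Anc at *
  rw [S.geod_split hyz, Walk.mem_support_append_iff]
  exact Or.inl hxy

lemma anc_antisymm {x y : V} (h1 : S.Anc x y) (h2 : S.Anc y x) : x = y := by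
  have a := S.dist_add_of_anc h1
  have b := S.dist_add_of_anc h2
  have c : S.T.dist x y = S.T.dist y x := SimpleGraph.dist_comm
  have : S.T.dist x y = 0 := by omega
  exact (S.T_conn.dist_eq_zero_iff).1 this

lemma anc_of_mem_geod {x y z : V} (hxz : S.Anc x z) (hy : y ∈ (S.geod x z).support) :
    S.Anc x y := by
  have hsplit := S.geod_split hxz
  have h2 := S.geod_split hy
  have hp : ((S.geod S.root x).append (S.geod x y)).IsPath := by
    apply Walk.IsPath.of_append_left (q := S.geod y z)
    rw [← Walk.append_assoc, ← h2, ← hsplit]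
    exact S.geod_isPath _ _
  have := S.geod_unique _ hp
  unfold Anc
  rw [← this, Walk.mem_support_append_iff]
  exact Or.inl (Walk.end_mem_support _)

lemma anc_of_mem_geod' {x y z : V} (hxz : S.Anc x z) (hy : y ∈ (S.geod x z).support) :
    S.Anc y z := by
  unfold Anc
  rw [S.geod_split hxz, Walk.mem_support_append_iff]
  exact Or.inr hy

lemma anc_comparable {x y z : V} (hx : S.Anc x z) (hy : S.Anc y z) :
    S.Anc x y ∨ S.Anc y x := by
  have hsplit := S.geod_split hx
  unfold Anc at hy
  rw [hsplit, Walk.mem_support_append_iff] at hy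
  rcases hy with h | h
  · exact Or.inr h
  · exact Or.inl (S.anc_of_mem_geod hx h)

lemma wedge_anc₁ (u w : V) : S.Anc (S.wedge u w) u := ((S.exists_wedge u w).choose_spec.1).1

lemma wedge_anc₂ (u w : V) : S.Anc (S.wedge u w) w := ((S.exists_wedge u w).choose_spec.1).2

lemma wedge_max (u w : V) {y : V} (h1 : S.Anc y u) (h2 : S.Anc y w) :
    S.T.dist S.root y ≤ S.T.dist S.root (S.wedge u w) :=
  (S.exists_wedge u w).choose_spec.2 y h1 h2

lemma anc_wedge {u w y : V} (h1 : S.Anc y u) (h2 : S.Anc y w) : S.Anc y (S.wedge u w) := by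
  rcases S.anc_comparable h1 (S.wedge_anc₁ u w) with h | h
  · exact h
  · have hd := S.dist_add_of_anc h
    have hd2 := S.wedge_max u w h1 h2
    have : S.T.dist (S.wedge u w) y = 0 := by omega
    have := (S.T_conn.dist_eq_zero_iff).1 this
    rw [← this]
    exact S.anc_refl _

lemma wedge_eq_left_iff {u w : V} : S.wedge u w = u ↔ S.Anc u w := by
  constructor
  · intro h; rw [← h]; exact S.wedge_anc₂ u w
  · intro h
    exact S.anc_antisymm (S.wedge_anc₁ u w) (S.anc_wedge (S.anc_refl u) h)

lemma wedge_comm (u w : V) : S.wedge u w = S.wedge w u :=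
  S.anc_antisymm (S.anc_wedge (S.wedge_anc₂ u w) (S.wedge_anc₁ u w))
    (S.anc_wedge (S.wedge_anc₂ w u) (S.wedge_anc₁ w u))

lemma gfun_self (u : V) : S.gfun u u = 0 := if_pos rfl

lemma vle_refl (u : V) : S.vle u u := Or.inl (S.wedge_eq_left_iff.2 (S.anc_refl u))

lemma vle_of_anc {u w : V} (h : S.Anc u w) : S.vle u w :=
  Or.inl (S.wedge_eq_left_iff.2 h)

lemma not_vle_of_anc {u w : V} (h : S.Anc u w) (hne : u ≠ w) : ¬ S.vle w u := by
  have hw : S.wedge w u = u := by rw [S.wedge_comm]; exact S.wedge_eq_left_iff.2 h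
  rintro (h1 | ⟨h2, h3⟩)
  · rw [hw] at h1; exact hne h1
  · rw [hw] at h3
    rw [S.gfun_self] at h3
    exact Nat.not_lt_zero _ h3

lemma first_adj {u w : V} (h : u ≠ w) : S.T.Adj u ((S.geod u w).getVert 1) := by
  have hl : 0 < (S.geod u w).length := by
    rw [S.geod_length]; exact S.dist_pos_of_ne h
  have := Walk.adj_getVert_succ (S.geod u w) hl
  rwa [Walk.getVert_zero] at this

lemma first_mem {u w : V} : (S.geod u w).getVert 1 ∈ (S.geod u w).support := by
  rw [Walk.mem_support_iff_exists_getVert]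
  by_cases h : 1 ≤ (S.geod u w).length
  · exact ⟨1, rfl, h⟩
  · have h0 : (S.geod u w).length = 0 := by omega
    refine ⟨0, ?_, Nat.zero_le _⟩
    rw [Walk.getVert_zero, Walk.getVert_of_length_le _ (by omega)]
    exact Walk.eq_of_length_eq_zero h0

lemma next_eq_of_gfun_eq {m u w : V} (hu : m ≠ u) (hw : m ≠ w)
    (h : S.gfun m u = S.gfun m w) :
    (S.geod m u).getVert 1 = (S.geod m w).getVert 1 := by
  rw [gfun, if_neg hu, gfun, if_neg hw] at h
  have h1 := S.first_adj hu
  have h2 := S.first_adj hw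
  by_cases hm : m = S.root
  · subst hm
    obtain ⟨a, ha⟩ := Set.ncard_eq_one.1 S.root_deg
    have e1 : (S.geod S.root u).getVert 1 ∈ S.T.neighborSet S.root := h1
    have e2 : (S.geod S.root w).getVert 1 ∈ S.T.neighborSet S.root := h2
    rw [ha] at e1 e2
    rw [e1, e2]
  · exact (S.label_bij m hm).injOn h1 h2 h

lemma vle_total (u w : V) : S.vle u w ∨ S.vle w u := by
  by_cases huw : u = w
  · exact Or.inl (huw ▸ S.vle_refl u)
  set m := S.wedge u w with hm
  by_cases h1 : m = u
  · exact Or.inl (Or.inl h1)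
  by_cases h2 : m = w
  · exact Or.inr (Or.inl (by rw [S.wedge_comm]; exact h2))
  rcases Nat.lt_trichotomy (S.gfun m u) (S.gfun m w) with h | h | h
  · exact Or.inl (Or.inr ⟨h1, h⟩)
  · -- equal labels: contradiction with maximality
    exfalso
    have hx := S.next_eq_of_gfun_eq h1 h2 h
    set x := (S.geod m u).getVert 1 with hxdef
    have hxadj : S.T.Adj m x := S.first_adj h1
    have hxu : x ∈ (S.geod m u).support := S.first_mem
    have hxw : x ∈ (S.geod m w).support := by rw [hx]; exact S.first_mem
    have hancu : S.Anc x u := S.anc_of_mem_geod' (S.wedge_anc₁ u w) hxu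
    have hancw : S.Anc x w := S.anc_of_mem_geod' (S.wedge_anc₂ u w) hxw
    have hd1 : S.T.dist m x + S.T.dist x u = S.T.dist m u := S.dist_split hxu
    have hd2 : S.T.dist S.root m + S.T.dist m u = S.T.dist S.root u :=
      S.dist_add_of_anc (S.wedge_anc₁ u w)
    have hd3 : S.T.dist S.root x + S.T.dist x u = S.T.dist S.root u :=
      S.dist_add_of_anc hancu
    have hdx : S.T.dist m x = 1 := S.dist_adj hxadj
    have hmax := S.wedge_max u w hancu hancw
    rw [← hm] at hmax
    omega
  · refine Or.inr (Or.inr ⟨?_, ?_⟩)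
    · rw [S.wedge_comm w u]; exact h2
    · rw [S.wedge_comm w u]; exact h

/-- The parent of a vertex. -/
noncomputable def par (v : V) : V := (S.geod v S.root).getVert 1

lemma eV_eq (v : V) : S.eV v = s(v, S.par v) := rfl

lemma geod_reverse (u w : V) : (S.geod u w).reverse = S.geod w u :=
  S.geod_unique _ ((S.geod_isPath u w).reverse)

lemma par_adj {v : V} (h : v ≠ S.root) : S.T.Adj v (S.par v) := S.first_adj h

lemma anc_par {v : V} (h : v ≠ S.root) :
    S.Anc (S.par v) v ∧ S.T.dist S.root (S.par v) + 1 = S.T.dist S.root v := by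
  have hmem : S.par v ∈ (S.geod S.root v).support := by
    rw [← S.geod_reverse v S.root, Walk.support_reverse, List.mem_reverse]
    exact S.first_mem
  have hanc : S.Anc (S.par v) v := hmem
  have h1 := S.dist_add_of_anc hanc
  have h2 : S.T.dist (S.par v) v = 1 := by
    rw [SimpleGraph.dist_comm]; exact S.dist_adj (S.par_adj h)
  exact ⟨hanc, by omega⟩

lemma ne_root_of_dist {v : V} (h : 0 < S.T.dist S.root v) : v ≠ S.root := by
  rintro rfl
  simp [SimpleGraph.dist_self] at h

lemma par_of_child {a b : V} (hadj : S.T.Adj a b)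
    (hd : S.T.dist S.root b = S.T.dist S.root a + 1) :
    S.par b = a ∧ S.Anc a b := by
  have hbroot : b ≠ S.root := S.ne_root_of_dist (by omega)
  have hnb : b ∉ (S.geod a S.root).support := by
    intro hmem
    have hmem' : b ∈ (S.geod S.root a).support := by
      rw [← S.geod_reverse a S.root, Walk.support_reverse, List.mem_reverse]; exact hmem
    have := S.dist_add_of_anc (show S.Anc b a from hmem')
    omega
  have hpath : (Walk.cons hadj.symm (S.geod a S.root)).IsPath :=
    (S.geod_isPath a S.root).cons hnb
  have heq := S.geod_unique _ hpath
  constructor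
  · rw [par, ← heq, Walk.getVert_cons_succ (n := 0), Walk.getVert_zero]
  · show a ∈ (S.geod S.root b).support
    rw [← S.geod_reverse b S.root, Walk.support_reverse, List.mem_reverse, ← heq,
      Walk.support_cons]
    exact List.mem_cons_of_mem _ (Walk.start_mem_support _)

lemma adj_dist_cases {a b : V} (h : S.T.Adj a b) :
    S.T.dist S.root b = S.T.dist S.root a + 1 ∨
      S.T.dist S.root a = S.T.dist S.root b + 1 := by
  by_cases hab : S.Anc a b
  · left
    have h1 := S.dist_add_of_anc hab
    have h2 : S.T.dist a b = 1 := S.dist_adj h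
    omega
  · right
    have hna : a ∉ (S.geod b S.root).support := by
      intro hmem
      apply hab
      show a ∈ (S.geod S.root b).support
      rwa [← S.geod_reverse b S.root, Walk.support_reverse, List.mem_reverse]
    have hpath : (Walk.cons h (S.geod b S.root)).IsPath :=
      (S.geod_isPath b S.root).cons hna
    have heq := S.geod_unique _ hpath
    have := congrArg Walk.length heq
    rw [Walk.length_cons, S.geod_length, S.geod_length] at this
    rw [SimpleGraph.dist_comm (u := S.root) (v := a), SimpleGraph.dist_comm (u := S.root)]
    omega
lemma vle_child {a b : V} (hadj : S.T.Adj a b)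
    (hd : S.T.dist S.root b = S.T.dist S.root a + 1) : S.vle a b ∧ ¬ S.vle b a := by
  have hanc := (S.par_of_child hadj hd).2
  exact ⟨S.vle_of_anc hanc, S.not_vle_of_anc hanc hadj.ne⟩

lemma iota_tau_child {a b : V} (hadj : S.T.Adj a b)
    (hd : S.T.dist S.root b = S.T.dist S.root a + 1) :
    S.tau s(a, b) = a ∧ S.iota s(a, b) = b := by
  obtain ⟨h1, h2⟩ := S.vle_child hadj hd
  have hout : s((Quot.out s(a, b)).1, (Quot.out s(a, b)).2) = s(a, b) := by
    rw [Sym2.mk]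
    exact Quot.out_eq _
  rw [Sym2.eq_iff] at hout
  unfold tau iota
  rcases hout with ⟨ha, hb⟩ | ⟨ha, hb⟩
  · rw [ha, hb, if_pos h1, if_pos h1]; exact ⟨rfl, rfl⟩
  · rw [ha, hb, if_neg h2, if_neg h2]; exact ⟨rfl, rfl⟩

lemma edge_decomp {e : Sym2 V} (he : e ∈ S.T.edgeSet) :
    S.T.Adj (S.tau e) (S.iota e) ∧
      S.T.dist S.root (S.iota e) = S.T.dist S.root (S.tau e) + 1 ∧
      e = s(S.tau e, S.iota e) := by
  have hout : s((Quot.out e).1, (Quot.out e).2) = e := by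
    rw [Sym2.mk]; exact Quot.out_eq _
  set x := (Quot.out e).1
  set y := (Quot.out e).2
  have hadj : S.T.Adj x y := by rw [← SimpleGraph.mem_edgeSet, hout]; exact he
  rcases S.adj_dist_cases hadj with hd | hd
  · obtain ⟨ht, hi⟩ := S.iota_tau_child hadj hd
    rw [← hout, ht, hi]
    exact ⟨hadj, hd, rfl⟩
  · obtain ⟨ht, hi⟩ := S.iota_tau_child hadj.symm hd
    rw [Sym2.eq_swap] at hout
    rw [← hout, ht, hi]
    exact ⟨hadj.symm, hd, rfl⟩

lemma eV_iota {e : Sym2 V} (he : e ∈ S.T.edgeSet) :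
    S.par (S.iota e) = S.tau e ∧ S.eV (S.iota e) = e := by
  obtain ⟨hadj, hd, hrep⟩ := S.edge_decomp he
  have hp := S.par_of_child hadj hd
  refine ⟨hp.1, ?_⟩
  rw [S.eV_eq, hp.1, Sym2.eq_swap, ← hrep]

/-- The list of labels along a walk. -/
noncomputable def labs : {x y : V} → S.T.Walk x y → List ℕ
  | _, _, Walk.nil => []
  | x, _, Walk.cons (v := z) _ p => S.label x z :: labs p

@[simp] lemma labs_nil {x : V} : S.labs (Walk.nil : S.T.Walk x x) = [] := rfl

@[simp] lemma labs_cons {x z y : V} (h : S.T.Adj x z) (p : S.T.Walk z y) :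
    S.labs (Walk.cons h p) = S.label x z :: S.labs p := by
  simp [labs]

lemma labs_append {x y z : V} (p : S.T.Walk x y) (q : S.T.Walk y z) :
    S.labs (p.append q) = S.labs p ++ S.labs q := by
  induction p with
  | nil => simp
  | cons h p ih => simp [ih]

lemma labs_length {x y : V} (p : S.T.Walk x y) : (S.labs p).length = p.length := by
  induction p with
  | nil => simp
  | cons h p ih => simp [ih]

lemma label_bound {x z : V} (h : S.T.Adj x z) : S.label x z ≤ Fintype.card V := by
  by_cases hx : x = S.root
  · subst hx
    rw [S.label_root z h]
    have : Nonempty V := ⟨z⟩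
    exact Fintype.card_pos
  · have := (S.label_bij x hx).mapsTo (show z ∈ S.T.neighborSet x from h)
    have h2 : ncdeg S.T x ≤ Fintype.card V := by
      rw [ncdeg, ← Nat.card_eq_fintype_card, ← Set.ncard_univ]
      exact Set.ncard_le_ncard (Set.subset_univ _) (Set.toFinite _)
    simp only [Set.mem_Iio] at this
    omega

lemma labs_bound {x y : V} (p : S.T.Walk x y) : ∀ d ∈ S.labs p, d ≤ Fintype.card V := by
  induction p with
  | nil => simp
  | cons h p ih =>
    simp only [labs_cons, List.mem_cons]
    rintro d (rfl | hd)
    · exact S.label_bound h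
    · exact ih d hd

lemma labs_first {m u : V} (h : m ≠ u) :
    ∃ l, S.labs (S.geod m u) = S.gfun m u :: l := by
  obtain ⟨z, h', q, hq⟩ := Walk.exists_eq_cons_of_ne h (S.geod m u)
  refine ⟨S.labs q, ?_⟩
  rw [hq, S.labs_cons]
  congr 1
  rw [gfun, if_neg h, hq, Walk.getVert_cons_succ (n := 0), Walk.getVert_zero]

/-- The label sequence from the root to `u`. -/
noncomputable def K (u : V) : List ℕ := S.labs (S.geod S.root u)

lemma K_split {m u : V} (h : S.Anc m u) :
    S.K u = S.K m ++ S.labs (S.geod m u) := by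
  rw [K, K, S.geod_split h, S.labs_append]

lemma K_length (u : V) : (S.K u).length = S.T.dist S.root u := by
  rw [K, S.labs_length, S.geod_length]

lemma K_length_lt (u : V) : (S.K u).length < Fintype.card V := by
  rw [K, S.labs_length]
  exact (S.geod_isPath S.root u).length_lt

lemma K_bound (u : V) : ∀ d ∈ S.K u, d ≤ Fintype.card V := S.labs_bound _
/-- Base-`B` value of a digit list. -/
def lval (B : ℕ) (l : List ℕ) : ℕ := l.foldl (fun a d => a * B + (d + 1)) 0

lemma foldl_val (B : ℕ) (l : List ℕ) : ∀ a : ℕ,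
    l.foldl (fun a d => a * B + (d + 1)) a = a * B ^ l.length + lval B l := by
  induction l with
  | nil => intro a; simp [lval]
  | cons d t ih =>
    intro a
    simp only [List.foldl_cons, List.length_cons, lval]
    rw [ih (a * B + (d + 1)), ih (0 * B + (d + 1))]
    ring

lemma lval_cons (B d : ℕ) (t : List ℕ) :
    lval B (d :: t) = (d + 1) * B ^ t.length + lval B t := by
  simp only [lval, List.foldl_cons]
  rw [foldl_val B t, foldl_val B t]
  ring

lemma lval_append (B : ℕ) (l l' : List ℕ) :
    lval B (l ++ l') = lval B l * B ^ l'.length + lval B l' := by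
  simp only [lval, List.foldl_append]
  rw [foldl_val B l']
  rfl

lemma lval_lt {B : ℕ} {l : List ℕ} (h : ∀ d ∈ l, d + 2 ≤ B) :
    lval B l < B ^ l.length := by
  induction l with
  | nil => simp [lval]
  | cons d t ih =>
    have h1 : lval B t < B ^ t.length := ih (fun x hx => h x (List.mem_cons_of_mem _ hx))
    have h2 : d + 2 ≤ B := h d List.mem_cons_self
    rw [lval_cons, List.length_cons, pow_succ]
    have h3 : (d + 1) * B ^ t.length + lval B t < (d + 1) * B ^ t.length + B ^ t.length :=
      Nat.add_lt_add_left h1 _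
    have h4 : (d + 1) * B ^ t.length + B ^ t.length = (d + 2) * B ^ t.length := by ring
    have h5 : (d + 2) * B ^ t.length ≤ B ^ t.length * B := by
      rw [mul_comm (B ^ t.length) B]
      exact Nat.mul_le_mul_right _ h2
    omega

lemma lval_pos {B : ℕ} {l : List ℕ} (h : l ≠ []) : 1 ≤ lval B l := by
  induction l with
  | nil => exact absurd rfl h
  | cons d t ih =>
    rw [lval_cons]
    by_cases ht : t = []
    · subst ht; simp [lval]
    · have := ih ht; omega

lemma phi_arith0 {B N p lq vp vq : ℕ} (hB : 1 ≤ B) (hvq : 1 ≤ vq) (hlen : p + lq ≤ N) :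
    vp * B ^ (N - p) < (vp * B ^ lq + vq) * B ^ (N - (p + lq)) := by
  have e1 : B ^ lq * B ^ (N - (p + lq)) = B ^ (N - p) := by
    rw [← pow_add]; congr 1; omega
  have hX : 0 < B ^ (N - (p + lq)) := pow_pos hB _
  calc vp * B ^ (N - p) < vp * B ^ (N - p) + vq * B ^ (N - (p + lq)) :=
        Nat.lt_add_of_pos_right (Nat.mul_pos hvq hX)
    _ = (vp * B ^ lq + vq) * B ^ (N - (p + lq)) := by
        rw [Nat.add_mul, mul_assoc, e1]

lemma phi_arith {B N k ls lt a b vm vs vt : ℕ} (hB : 1 ≤ B)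
    (hvs : vs < B ^ ls) (hab : a < b)
    (hlu : k + (ls + 1) ≤ N) (hlw : k + (lt + 1) ≤ N) :
    (vm * B ^ (ls + 1) + ((a + 1) * B ^ ls + vs)) * B ^ (N - (k + (ls + 1)))
      < (vm * B ^ (lt + 1) + ((b + 1) * B ^ lt + vt)) * B ^ (N - (k + (lt + 1))) := by
  have hXpos : 0 < B ^ (N - (k + (ls + 1))) := pow_pos hB _
  have e1 : B ^ (ls + 1) * B ^ (N - (k + (ls + 1))) = B ^ (N - k) := by
    rw [← pow_add]; congr 1; omega
  have e2 : B ^ (lt + 1) * B ^ (N - (k + (lt + 1))) = B ^ (N - k) := by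
    rw [← pow_add]; congr 1; omega
  have e3 : B ^ ls * B ^ (N - (k + (ls + 1))) = B ^ (N - k - 1) := by
    rw [← pow_add]; congr 1; omega
  have e4 : B ^ lt * B ^ (N - (k + (lt + 1))) = B ^ (N - k - 1) := by
    rw [← pow_add]; congr 1; omega
  have key : ((a + 1) * B ^ ls + vs) * B ^ (N - (k + (ls + 1)))
      < ((b + 1) * B ^ lt + vt) * B ^ (N - (k + (lt + 1))) := by
    calc ((a + 1) * B ^ ls + vs) * B ^ (N - (k + (ls + 1)))
        < ((a + 1) * B ^ ls + B ^ ls) * B ^ (N - (k + (ls + 1))) :=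
          Nat.mul_lt_mul_of_pos_right (Nat.add_lt_add_left hvs _) hXpos
      _ = (a + 2) * (B ^ ls * B ^ (N - (k + (ls + 1)))) := by ring
      _ = (a + 2) * B ^ (N - k - 1) := by rw [e3]
      _ ≤ (b + 1) * B ^ (N - k - 1) := Nat.mul_le_mul_right _ (by omega)
      _ = (b + 1) * (B ^ lt * B ^ (N - (k + (lt + 1)))) := by rw [e4]
      _ = ((b + 1) * B ^ lt) * B ^ (N - (k + (lt + 1))) := by rw [mul_assoc]
      _ ≤ ((b + 1) * B ^ lt + vt) * B ^ (N - (k + (lt + 1))) :=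
          Nat.mul_le_mul_right _ (Nat.le_add_right _ _)
  have expand : ∀ E X Y : ℕ, (vm * E + Y) * X = vm * (E * X) + Y * X := fun _ _ _ => by ring
  calc (vm * B ^ (ls + 1) + ((a + 1) * B ^ ls + vs)) * B ^ (N - (k + (ls + 1)))
      = vm * (B ^ (ls + 1) * B ^ (N - (k + (ls + 1))))
          + ((a + 1) * B ^ ls + vs) * B ^ (N - (k + (ls + 1))) := expand _ _ _
    _ = vm * B ^ (N - k) + ((a + 1) * B ^ ls + vs) * B ^ (N - (k + (ls + 1))) := by rw [e1]
    _ < vm * B ^ (N - k) + ((b + 1) * B ^ lt + vt) * B ^ (N - (k + (lt + 1))) :=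
        Nat.add_lt_add_left key _
    _ = vm * (B ^ (lt + 1) * B ^ (N - (k + (lt + 1))))
          + ((b + 1) * B ^ lt + vt) * B ^ (N - (k + (lt + 1))) := by rw [e2]
    _ = (vm * B ^ (lt + 1) + ((b + 1) * B ^ lt + vt)) * B ^ (N - (k + (lt + 1))) :=
        (expand _ _ _).symm

/-- A strictly `vlt`-monotone measure on vertices. -/
noncomputable def phi (u : V) : ℕ :=
  lval (Fintype.card V + 3) (S.K u) *
    (Fintype.card V + 3) ^ (Fintype.card V - (S.K u).length)

lemma phi_lt_of_vlt {u w : V} (h : S.vlt u w) : S.phi u < S.phi w := by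
  obtain ⟨hle, hne⟩ := h
  have hKu := S.K_length_lt u
  have hKw := S.K_length_lt w
  rcases hle with hm | ⟨hm, hlt⟩
  · have hanc : S.Anc u w := S.wedge_eq_left_iff.1 hm
    have hsplit := S.K_split hanc
    set q := S.labs (S.geod u w) with hq
    have hqne : q ≠ [] := by
      have hql : q.length = S.T.dist u w := by rw [hq, S.labs_length, S.geod_length]
      have h2 := S.dist_pos_of_ne hne
      intro h0
      rw [h0] at hql
      simp at hql
      omega
    have hlen : (S.K u).length + q.length ≤ Fintype.card V := by
      have h2 := hKw
      rw [hsplit, List.length_append] at h2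
      omega
    simp only [phi]
    rw [hsplit, lval_append, List.length_append]
    exact phi_arith0 (by omega) (lval_pos hqne) hlen
  · have hmw : S.wedge u w ≠ w := by
      intro h2
      rw [h2, S.gfun_self] at hlt
      exact Nat.not_lt_zero _ hlt
    obtain ⟨s, hs⟩ := S.labs_first (Ne.symm (fun h2 => hm h2.symm) : S.wedge u w ≠ u)
    obtain ⟨t, ht⟩ := S.labs_first hmw
    have hsplitu := S.K_split (S.wedge_anc₁ u w)
    have hsplitw := S.K_split (S.wedge_anc₂ u w)
    rw [hs] at hsplitu
    rw [ht] at hsplitw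
    have hlu : (S.K (S.wedge u w)).length + (s.length + 1) ≤ Fintype.card V := by
      have h2 := hKu
      rw [hsplitu, List.length_append, List.length_cons] at h2
      omega
    have hlw : (S.K (S.wedge u w)).length + (t.length + 1) ≤ Fintype.card V := by
      have h2 := hKw
      rw [hsplitw, List.length_append, List.length_cons] at h2
      omega
    have hsb : ∀ d ∈ s, d + 2 ≤ Fintype.card V + 3 := by
      intro d hd
      have : d ∈ S.K u := by
        rw [hsplitu]
        exact List.mem_append_right _ (List.mem_cons_of_mem _ hd)
      have := S.K_bound u d this
      omega
    simp only [phi]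
    rw [hsplitu, hsplitw, lval_append, lval_append, lval_cons, lval_cons,
      List.length_append, List.length_append, List.length_cons, List.length_cons]
    exact phi_arith (by omega) (lval_lt hsb) hlt hlu hlw

lemma phi_le_of_vle {u w : V} (h : S.vle u w) : S.phi u ≤ S.phi w := by
  by_cases hne : u = w
  · subst hne; exact le_refl _
  · exact le_of_lt (S.phi_lt_of_vlt ⟨h, hne⟩)
lemma mem_diag_iff {x v : V} : x ∈ Sym2.diag v ↔ x = v := by
  have h : Sym2.diag v = s(v, v) := rfl
  rw [h, Sym2.mem_iff, or_self]

lemma mem_eV_iff {x v : V} : x ∈ S.eV v ↔ x = v ∨ x = S.par v := by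
  rw [S.eV_eq]; exact Sym2.mem_iff

lemma redundantAux_zero {n : ℕ} {c : Finset (Sym2 V)} :
    S.RedundantAux n 0 c ↔ ∃ v, S.Unblocked c v := Iff.rfl

lemma redundantAux_succ {n i : ℕ} {c : Finset (Sym2 V)} :
    S.RedundantAux n (i + 1) c ↔ (∃ v, S.Unblocked c v) ∧
      ¬ ∃ c₀, S.IsCell n c₀ ∧ dim c₀ = i ∧ S.RedundantAux n i c₀ ∧ S.PrincipalRedOf c₀ c :=
  Iff.rfl

lemma no_unblocked_of_critical {n : ℕ} {c : Finset (Sym2 V)} (hcrit : S.Critical n c) :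
    ∀ v : V, ¬ S.Unblocked c v := by
  intro v hv
  obtain ⟨hred, hcol⟩ := hcrit
  apply hred
  show S.RedundantAux n (dim c) c
  cases hd : dim c with
  | zero =>
    rw [S.redundantAux_zero]
    exact ⟨v, hv⟩
  | succ i =>
    rw [S.redundantAux_succ]
    refine ⟨⟨v, hv⟩, ?_⟩
    rintro ⟨c₀, h1, h2, h3, h4⟩
    exact hcol ⟨c₀, h1, show S.RedundantAux n (dim c₀) c₀ by rw [h2]; exact h3, h4⟩

lemma no_OR_of_critical {n : ℕ} {c : Finset (Sym2 V)} (hn : 1 ≤ n) (hc : S.IsCell n c)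
    (hcrit : S.Critical n c) : ∀ e₀, ¬ S.OrderResp c e₀ := by
  intro e₀ he₀
  have hblocked : ∀ v : V, ¬ S.Unblocked c v := S.no_unblocked_of_critical hcrit
  have hdisj := hc.2.2
  -- choose a `phi`-minimal order-respecting edge
  have hFne : (Finset.univ.filter (fun e => S.OrderResp c e)).Nonempty :=
    ⟨e₀, Finset.mem_filter.2 ⟨Finset.mem_univ _, he₀⟩⟩
  obtain ⟨e, heF, hemin⟩ := Finset.exists_min_image _ (fun e => S.phi (S.iota e)) hFne
  have hOR : S.OrderResp c e := (Finset.mem_filter.1 heF).2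
  have hmin : ∀ e', S.OrderResp c e' → S.phi (S.iota e) ≤ S.phi (S.iota e') := by
    intro e' h'
    exact hemin e' (Finset.mem_filter.2 ⟨Finset.mem_univ _, h'⟩)
  obtain ⟨hec, heT, hORP⟩ := hOR
  obtain ⟨hadj, hdist, hrep⟩ := S.edge_decomp heT
  obtain ⟨hpar, heV⟩ := S.eV_iota heT
  have hediag : ¬ e.IsDiag := S.T.not_isDiag_of_mem_edgeSet heT
  have hιe : S.iota e ∈ e := by
    have h := (Sym2.mem_iff (a := S.iota e) (b := S.tau e) (c := S.iota e)).2 (Or.inr rfl)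
    rwa [← hrep] at h
  have hτe : S.tau e ∈ e := by
    have h := (Sym2.mem_iff (a := S.tau e) (b := S.tau e) (c := S.iota e)).2 (Or.inl rfl)
    rwa [← hrep] at h
  have hι_root : S.iota e ≠ S.root := S.ne_root_of_dist (by omega)
  have hdiagι_nc : Sym2.diag (S.iota e) ∉ c := by
    intro h
    exact hdisj (Sym2.diag (S.iota e)) h e hec
      (fun h2 => hediag (h2 ▸ Sym2.diag_isDiag _)) (S.iota e) (mem_diag_iff.2 rfl) hιe
  set c₀ : Finset (Sym2 V) := insert (Sym2.diag (S.iota e)) (c.erase e) with hc₀def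
  have hdiagι_nerase : Sym2.diag (S.iota e) ∉ c.erase e :=
    fun h => hdiagι_nc (Finset.mem_of_mem_erase h)
  have hdiagι_c₀ : Sym2.diag (S.iota e) ∈ c₀ := by
    rw [hc₀def]; exact Finset.mem_insert_self _ _
  -- c₀ is a cell
  have hc₀card : c₀.card = n := by
    rw [hc₀def, Finset.card_insert_of_notMem hdiagι_nerase, Finset.card_erase_of_mem hec,
      hc.1]
    omega
  have hc₀disj : ∀ s ∈ c₀, ∀ t ∈ c₀, s ≠ t → ∀ x : V, x ∈ s → x ∉ t := by
    intro s hs t ht hst x hxs hxt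
    rcases Finset.mem_insert.1 hs with rfl | hs' <;> rcases Finset.mem_insert.1 ht with h' | ht'
    · exact hst h'.symm
    · rw [mem_diag_iff] at hxs
      subst hxs
      exact hdisj e hec t (Finset.mem_of_mem_erase ht') (Finset.ne_of_mem_erase ht').symm
        (S.iota e) hιe hxt
    · subst h'
      rw [mem_diag_iff] at hxt
      subst hxt
      exact hdisj e hec s (Finset.mem_of_mem_erase hs') (Finset.ne_of_mem_erase hs').symm
        (S.iota e) hιe hxs
    · exact hdisj s (Finset.mem_of_mem_erase hs') t (Finset.mem_of_mem_erase ht') hst x hxs hxt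
  have hcell₀ : S.IsCell n c₀ := by
    refine ⟨hc₀card, ?_, hc₀disj⟩
    intro s hs
    rcases Finset.mem_insert.1 hs with rfl | hs'
    · exact Or.inl (Sym2.diag_isDiag _)
    · exact hc.2.1 s (Finset.mem_of_mem_erase hs')
  -- ι e is unblocked in c₀
  have hub : S.Unblocked c₀ (S.iota e) := by
    refine ⟨Finset.mem_insert_self _ _, ?_⟩
    rintro (h | ⟨s, hs, hsne, x, hx1, hx2⟩)
    · exact hι_root h
    · rw [heV] at hx1
      rcases Finset.mem_insert.1 hs with rfl | hs'
      · exact hsne rfl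
      · exact hdisj e hec s (Finset.mem_of_mem_erase hs') (Finset.ne_of_mem_erase hs').symm
          x hx1 hx2
  -- principal reduction of c₀ is c
  have hpred : S.PrincipalRedOf c₀ c := by
    refine ⟨S.iota e, hub, ?_, ?_⟩
    · intro u hu
      by_cases h : u = S.iota e
      · rw [h]; exact S.vle_refl _
      · have hu_c : Sym2.diag u ∈ c := by
          rcases Finset.mem_insert.1 hu.1 with h1 | h1
          · exact absurd (Sym2.diag_injective h1) h
          · exact Finset.mem_of_mem_erase h1
        have hu_root : u ≠ S.root := fun hr => hu.2 (Or.inl hr)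
        have hbl : S.Blocked c u := by
          by_contra hb
          exact hblocked u ⟨hu_c, hb⟩
        rcases hbl with hr | ⟨s, hs, hsne, x, hx1, hx2⟩
        · exact absurd hr hu_root
        by_cases hse : s = e
        · have hx2' : x ∈ e := hse ▸ hx2
          rw [hrep, Sym2.mem_iff] at hx2'
          rcases S.mem_eV_iff.1 hx1 with hxu | hxp
          · -- x = u lies in e
            exfalso
            rcases hx2' with h2 | h2
            · apply hdisj (Sym2.diag u) hu_c e hec
                (fun hh => hediag (hh ▸ Sym2.diag_isDiag _)) u (mem_diag_iff.2 rfl)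
              rw [← hxu, h2]
              exact hτe
            · exact h (hxu.symm.trans h2)
          · -- x = par u lies in e
            rcases hx2' with h2 | h2
            · -- par u = tau e : apply order-respecting property
              refine (hORP u hu_root hu_c (S.mem_eV_iff.2 (Or.inr ?_))).1
              rw [← h2]
              exact hxp
            · -- par u = iota e : u is blocked in c₀ by diag (iota e)
              exfalso
              apply hu.2
              refine Or.inr ⟨Sym2.diag (S.iota e), hdiagι_c₀, ?_, x, hx1, ?_⟩
              · intro hh
                exact h (Sym2.diag_injective hh.symm)
              · exact mem_diag_iff.2 h2
        · apply absurd hu.2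
          intro h2
          apply h2
          exact Or.inr ⟨s, Finset.mem_insert_of_mem (Finset.mem_erase.2 ⟨hse, hs⟩), hsne,
            x, hx1, hx2⟩
    · show c = S.redFrom c₀ (S.iota e)
      rw [redFrom, heV, hc₀def, Finset.erase_insert hdiagι_nerase,
        Finset.insert_erase hec]
  -- c₀ is redundant
  have hred : S.Redundant n c₀ := by
    show S.RedundantAux n (dim c₀) c₀
    cases hd : dim c₀ with
    | zero => exact S.redundantAux_zero.2 ⟨_, hub⟩
    | succ i =>
      rw [S.redundantAux_succ]
      refine ⟨⟨_, hub⟩, ?_⟩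
      rintro ⟨c₁, hc₁, hdim₁, hred₁, hpr₁⟩
      obtain ⟨w, hw_ub, hw_min, hc₀eq⟩ := hpr₁
      have hw_root : w ≠ S.root := fun hr => hw_ub.2 (Or.inl hr)
      have hw_c₁ : Sym2.diag w ∈ c₁ := hw_ub.1
      have hpw_adj : S.T.Adj w (S.par w) := S.par_adj hw_root
      have heVw_ndiag : ¬ (S.eV w).IsDiag := by
        rw [S.eV_eq, Sym2.mk_isDiag_iff]
        exact hpw_adj.ne
      have heVw_c₀ : S.eV w ∈ c₀ := by
        rw [hc₀eq]
        exact Finset.mem_insert_self _ _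
      have hdiagw_nc₀ : Sym2.diag w ∉ c₀ := by
        rw [hc₀eq]
        intro h
        rcases Finset.mem_insert.1 h with h1 | h1
        · exact heVw_ndiag (h1 ▸ Sym2.diag_isDiag w)
        · exact (Finset.mem_erase.1 h1).1 rfl
      have hw_ne_ι : w ≠ S.iota e := by
        intro h
        apply hdiagw_nc₀
        rw [hc₀def, h]
        exact Finset.mem_insert_self _ _
      have hdiagw_nc : Sym2.diag w ∉ c := by
        intro h
        apply hdiagw_nc₀
        rw [hc₀def]
        apply Finset.mem_insert_of_mem
        refine Finset.mem_erase.2 ⟨?_, h⟩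
        intro h2
        exact hediag (h2 ▸ Sym2.diag_isDiag w)
      by_cases hwτ : w = S.tau e
      · -- impossible: eV (tau e) and e share tau e inside c
        have h1 : S.eV w ≠ Sym2.diag (S.iota e) :=
          fun h => heVw_ndiag (h ▸ Sym2.diag_isDiag _)
        have h2 : S.eV w ∈ c.erase e := by
          have h3 := heVw_c₀
          rw [hc₀def] at h3
          rcases Finset.mem_insert.1 h3 with h4 | h4
          · exact absurd h4 h1
          · exact h4
        exact hdisj (S.eV w) (Finset.mem_of_mem_erase h2) e hec (Finset.ne_of_mem_erase h2)
          w (S.mem_eV_iff.2 (Or.inl rfl)) (hwτ ▸ hτe)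
      · have hwe : w ∉ e := by
          rw [hrep, Sym2.mem_iff]
          rintro (h | h)
          · exact hwτ h
          · exact hw_ne_ι h
        have heVw_nc₁ : S.eV w ∉ c₁ := by
          intro h
          exact hc₁.2.2 _ h _ hw_c₁ (fun hh => heVw_ndiag (hh ▸ Sym2.diag_isDiag w)) w
            (S.mem_eV_iff.2 (Or.inl rfl)) (mem_diag_iff.2 rfl)
        have hc₁eq : c₁ = insert (Sym2.diag w) (c₀.erase (S.eV w)) := by
          have h5 : S.eV w ∉ c₁.erase (Sym2.diag w) :=
            fun h => heVw_nc₁ (Finset.mem_of_mem_erase h)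
          rw [hc₀eq, redFrom, Finset.erase_insert h5, Finset.insert_erase hw_c₁]
        have hdiagι_c₁ : Sym2.diag (S.iota e) ∈ c₁ := by
          rw [hc₁eq]
          apply Finset.mem_insert_of_mem
          refine Finset.mem_erase.2 ⟨?_, hdiagι_c₀⟩
          intro h
          exact heVw_ndiag (h ▸ Sym2.diag_isDiag _)
        have hub_ι_c₁ : S.Unblocked c₁ (S.iota e) := by
          refine ⟨hdiagι_c₁, ?_⟩
          rintro (h | ⟨s, hs, hsne, x, hx1, hx2⟩)
          · exact hι_root h
          · rw [heV] at hx1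
            rw [hc₁eq] at hs
            rcases Finset.mem_insert.1 hs with rfl | hs'
            · rw [mem_diag_iff] at hx2
              exact hwe (hx2 ▸ hx1)
            · have hs₀ : s ∈ c₀ := Finset.mem_of_mem_erase hs'
              rw [hc₀def] at hs₀
              rcases Finset.mem_insert.1 hs₀ with rfl | hs''
              · exact hsne rfl
              · exact hdisj e hec s (Finset.mem_of_mem_erase hs'')
                  (Finset.ne_of_mem_erase hs'').symm x hx1 hx2
        have hvlt_w_ι : S.vlt w (S.iota e) := ⟨hw_min _ hub_ι_c₁, hw_ne_ι⟩
        have heVw_c : S.eV w ∈ c := by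
          have h3 := heVw_c₀
          rw [hc₀def] at h3
          rcases Finset.mem_insert.1 h3 with h4 | h4
          · exact absurd h4 (fun h => heVw_ndiag (h ▸ Sym2.diag_isDiag _))
          · exact Finset.mem_of_mem_erase h4
        have hdw := (S.anc_par hw_root).2
        obtain ⟨htw, hiw⟩ := S.iota_tau_child (a := S.par w) (b := w) hpw_adj.symm (by omega)
        have heVw_rep : S.eV w = s(S.par w, w) := by rw [S.eV_eq, Sym2.eq_swap]
        have hORw : S.OrderResp c (S.eV w) := by
          refine ⟨heVw_c, ?_, ?_⟩
          · rw [S.eV_eq]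
            exact hpw_adj
          · intro v hv_root hv_c hv_mem
            rw [heVw_rep, htw] at hv_mem
            rw [heVw_rep, hiw]
            rcases S.mem_eV_iff.1 hv_mem with hv1 | hv1
            · exfalso
              refine hdisj (Sym2.diag v) hv_c (S.eV w) heVw_c ?_ v (mem_diag_iff.2 rfl) ?_
              · intro h
                exact heVw_ndiag (h ▸ Sym2.diag_isDiag _)
              · rw [S.eV_eq, Sym2.mem_iff]
                exact Or.inr hv1.symm
            · have hv_ne_w : v ≠ w := fun h => hdiagw_nc (h ▸ hv_c)
              have hv_c₀ : Sym2.diag v ∈ c₀ := by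
                rw [hc₀def]
                apply Finset.mem_insert_of_mem
                refine Finset.mem_erase.2 ⟨?_, hv_c⟩
                intro h
                exact hediag (h ▸ Sym2.diag_isDiag v)
              have hv_c₁ : Sym2.diag v ∈ c₁ := by
                rw [hc₁eq]
                apply Finset.mem_insert_of_mem
                refine Finset.mem_erase.2 ⟨?_, hv_c₀⟩
                intro h
                exact heVw_ndiag (h ▸ Sym2.diag_isDiag v)
              have hv_ub : S.Unblocked c₁ v := by
                refine ⟨hv_c₁, ?_⟩
                rintro (h | ⟨s, hs, hsne, x, hx1, hx2⟩)
                · exact hv_root h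
                rcases S.mem_eV_iff.1 hx1 with rfl | hx1'
                · rw [hc₁eq] at hs
                  rcases Finset.mem_insert.1 hs with rfl | hs'
                  · rw [mem_diag_iff] at hx2
                    exact hv_ne_w hx2
                  · exact hc₀disj s (Finset.mem_of_mem_erase hs') (Sym2.diag x) hv_c₀
                      hsne x hx2 (mem_diag_iff.2 rfl)
                · rw [← hv1] at hx1'
                  rw [hc₁eq] at hs
                  rcases Finset.mem_insert.1 hs with rfl | hs'
                  · rw [mem_diag_iff] at hx2
                    exact hpw_adj.ne (hx2 ▸ hx1')
                  · refine hc₀disj s (Finset.mem_of_mem_erase hs') (S.eV w) heVw_c₀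
                      (Finset.mem_erase.1 hs').1 x hx2 ?_
                    rw [hx1']
                    exact S.mem_eV_iff.2 (Or.inr rfl)
              exact ⟨hw_min v hv_ub, fun h => hv_ne_w h.symm⟩
        have h1 := hmin _ hORw
        rw [heVw_rep, hiw] at h1
        have h2 := S.phi_lt_of_vlt hvlt_w_ι
        omega
  exact hcrit.2 ⟨c₀, hcell₀, hred, hpred⟩
end Lemmas
end Setup

/-- In a critical cell every vertex is blocked, and every edge `e` either is a deleted
edge, or lies in `T`, in which case `τ(e)` is essential and there is a vertex `v ∈ c`
adjacent to `τ(e)` in `T` with `τ(e) < v < ι(e)`. -/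
theorem stmt9 {V : Type} [Fintype V] [DecidableEq V] (S : Setup V) (n : ℕ) (hn : 1 ≤ n) (hsub : S.SuffSubdiv n)
    (c : Finset (Sym2 V)) (hc : S.IsCell n c) (hcrit : S.Critical n c) :
    (∀ v : V, Sym2.diag v ∈ c → S.Blocked c v) ∧
    ∀ e ∈ c, ¬ e.IsDiag →
      e ∉ S.T.edgeSet ∨
        (e ∈ S.T.edgeSet ∧ 3 ≤ ncdeg S.G (S.tau e) ∧
          ∃ v : V, Sym2.diag v ∈ c ∧ S.T.Adj v (S.tau e) ∧
            S.vlt (S.tau e) v ∧ S.vlt v (S.iota e)) := by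
  constructor
  · intro v hv
    by_contra hb
    exact S.no_unblocked_of_critical hcrit v ⟨hv, hb⟩
  · intro e hce hnd
    by_cases heT : e ∈ S.T.edgeSet
    · right
      have hnOR := S.no_OR_of_critical hn hc hcrit e
      have hex : ¬ ∀ v : V, v ≠ S.root → Sym2.diag v ∈ c → S.tau e ∈ S.eV v →
          S.vlt (S.iota e) v := fun hall => hnOR ⟨hce, heT, hall⟩
      push_neg at hex
      obtain ⟨v, hv_root, hv_c, hv_mem, hv_nlt⟩ := hex
      obtain ⟨hadj, hdist, hrep⟩ := S.edge_decomp heT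
      obtain ⟨hpar, heV⟩ := S.eV_iota heT
      have hdisj := hc.2.2
      have hediag : ¬ e.IsDiag := S.T.not_isDiag_of_mem_edgeSet heT
      have hιe : S.iota e ∈ e := by
        have h := (Sym2.mem_iff (a := S.iota e) (b := S.tau e) (c := S.iota e)).2 (Or.inr rfl)
        rwa [← hrep] at h
      have hτe : S.tau e ∈ e := by
        have h := (Sym2.mem_iff (a := S.tau e) (b := S.tau e) (c := S.iota e)).2 (Or.inl rfl)
        rwa [← hrep] at h
      have hv_ne_τ : v ≠ S.tau e := by
        intro h
        exact hdisj (Sym2.diag v) hv_c e hce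
          (fun hh => hediag (hh ▸ Sym2.diag_isDiag _)) v (GraphBraid.Setup.mem_diag_iff.2 rfl)
          (h ▸ hτe)
      have hv_ne_ι : v ≠ S.iota e := by
        intro h
        exact hdisj (Sym2.diag v) hv_c e hce
          (fun hh => hediag (hh ▸ Sym2.diag_isDiag _)) v (GraphBraid.Setup.mem_diag_iff.2 rfl)
          (h ▸ hιe)
      have hpv : S.par v = S.tau e := by
        rcases S.mem_eV_iff.1 hv_mem with h1 | h1
        · exact absurd h1.symm hv_ne_τ
        · exact h1.symm
      have hvadj : S.T.Adj v (S.tau e) := hpv ▸ S.par_adj hv_root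
      have hdv := (S.anc_par hv_root).2
      rw [hpv] at hdv
      have h1 : S.vlt (S.tau e) v := by
        have h' := S.vle_child hvadj.symm (by omega)
        exact ⟨h'.1, fun hh => hv_ne_τ hh.symm⟩
      have h2 : S.vlt v (S.iota e) := by
        rcases S.vle_total v (S.iota e) with hv' | hv'
        · exact ⟨hv', hv_ne_ι⟩
        · exact absurd ⟨hv', fun hh => hv_ne_ι hh.symm⟩ hv_nlt
      refine ⟨heT, ?_, v, hv_c, hvadj, h1, h2⟩
      have hτroot : S.tau e ≠ S.root := by
        intro h
        have hsub : ({S.iota e, v} : Set V) ⊆ S.T.neighborSet S.root := by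
          rw [← h]
          intro x hx
          rcases hx with rfl | hx
          · exact hadj
          · rw [Set.mem_singleton_iff] at hx
            subst hx
            exact hvadj.symm
        have h2' := Set.ncard_le_ncard hsub (Set.toFinite _)
        rw [Set.ncard_pair (fun hh => hv_ne_ι hh.symm)] at h2'
        have h3' : ncdeg S.T S.root = 1 := S.root_deg
        rw [ncdeg] at h3'
        omega
      have hdτ := (S.anc_par hτroot).2
      have hne1 : S.iota e ≠ S.par (S.tau e) := by
        intro h
        rw [h] at hdist
        omega
      have hne2 : v ≠ S.par (S.tau e) := by
        intro h
        rw [h] at hdv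
        omega
      have hsub : ({S.iota e, v, S.par (S.tau e)} : Set V) ⊆ S.G.neighborSet (S.tau e) := by
        intro x hx
        rcases hx with rfl | hx
        · exact S.T_le hadj
        · rcases hx with rfl | hx
          · exact S.T_le hvadj.symm
          · rw [Set.mem_singleton_iff] at hx
            subst hx
            exact S.T_le (S.par_adj hτroot)
      have hcard : ({S.iota e, v, S.par (S.tau e)} : Set V).ncard = 3 := by
        rw [Set.ncard_insert_of_notMem ?notmem (Set.toFinite _),
          Set.ncard_pair hne2]
        case notmem =>
          intro hh
          rcases hh with hh | hh
          · exact (fun hhh => hv_ne_ι hhh.symm) hh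
          · rw [Set.mem_singleton_iff] at hh
            exact hne1 hh
      have hfin := Set.ncard_le_ncard hsub (Set.toFinite _)
      rw [hcard] at hfin
      exact hfin
    · exact Or.inl heT

end GraphBraid
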